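/- (Combinatorial continuous max-flow is bounded by combinatorial total variation.) Let A be the incidence matrix of a directed graph with finite edge set E and finite vertex set V, let g : V → ℝ, and let a : V → ℝ be a source/sink indicator vector. Suppose F : E → ℝ and F_st : ℝ satisfy the divergence constraint AᵀF = F_st • a, the capacity constraint √(|Aᵀ|F²) ≤ g entrywise, and suppose u : V → ℝ satisfies aᵀu = 1. Then F_st ≤ gᵀ √(|Aᵀ|(Au)²). -/

import Mathlib

/-!
Pairing the divergence constraint with `u` gives `F_st = Fᵀ(Au)`. Every edge meets exactly two
vertices, so `2 Fᵀ(Au) = Σ_i Σ_e |A|_{e,i} F_e (Au)_e`, and Cauchy–Schwarz at each vertex together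
with the capacity constraint bounds the inner sum by `g_i √((|Aᵀ|(Au)²)_i)`. Hence `2 F_st` is at
most the total variation, which is nonnegative since `g ≥ 0`.
-/

open Matrix BigOperators

/-- `A` is the incidence matrix of a directed graph: each row (edge) has exactly one
entry `+1` and one entry `-1` at two distinct vertices, all other entries `0`. -/
def IsIncidenceMatrix {E V : Type*} (A : Matrix E V ℝ) : Prop :=
  ∀ e : E, ∃ i j : V, i ≠ j ∧ A e i = 1 ∧ A e j = -1 ∧
    ∀ k : V, k ≠ i → k ≠ j → A e k = 0

lemma Real.sum_mul_mul_le_sqrt_mul_sqrt {ι : Type*} (s : Finset ι) {w : ι → ℝ}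
    (hw : ∀ i ∈ s, 0 ≤ w i) (f g : ι → ℝ) :
    ∑ i ∈ s, w i * (f i * g i) ≤
      √(∑ i ∈ s, w i * f i ^ 2) * √(∑ i ∈ s, w i * g i ^ 2) := by
  have hsq (i) (hi : i ∈ s) (h : ι → ℝ) : w i * h i ^ 2 = (√(w i) * h i) ^ 2 := by
    rw [mul_pow, Real.sq_sqrt (hw i hi)]
  rw [Finset.sum_congr rfl fun i hi ↦ hsq i hi f, Finset.sum_congr rfl fun i hi ↦ hsq i hi g]
  convert Real.sum_mul_le_sqrt_mul_sqrt s (fun i ↦ √(w i) * f i) (fun i ↦ √(w i) * g i)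
    using 1
  refine Finset.sum_congr rfl fun i hi ↦ ?_
  rw [mul_mul_mul_comm, Real.mul_self_sqrt (hw i hi)]

lemma Matrix.eq_dotProduct_mulVec_of_transpose_mulVec_eq_smul {E V : Type*} [Fintype E]
    [Fintype V] {A : Matrix E V ℝ} {F : E → ℝ} {c : ℝ} {a u : V → ℝ}
    (hdiv : Aᵀ *ᵥ F = c • a) (hu : a ⬝ᵥ u = 1) : c = F ⬝ᵥ (A *ᵥ u) := by
  rw [dotProduct_mulVec, ← mulVec_transpose, hdiv, smul_dotProduct, hu, smul_eq_mul, mul_one]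

namespace IsIncidenceMatrix

variable {E V : Type*} [Fintype V] {A : Matrix E V ℝ}

lemma sum_abs_apply (hA : IsIncidenceMatrix A) (e : E) : ∑ i, |A e i| = 2 := by
  obtain ⟨i, j, hij, hi, hj, hzero⟩ := hA e
  rw [Finset.sum_eq_add_of_mem i j (Finset.mem_univ i) (Finset.mem_univ j) hij
    fun k _ hk ↦ by rw [hzero k hk.1 hk.2, abs_zero], hi, hj]
  norm_num

lemma sum_sum_abs_mul [Fintype E] (hA : IsIncidenceMatrix A) (x : E → ℝ) :
    ∑ i, ∑ e, |A e i| * x e = 2 * ∑ e, x e := by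
  simp_rw [Finset.sum_comm (γ := V), ← Finset.sum_mul, hA.sum_abs_apply, Finset.mul_sum]

end IsIncidenceMatrix

theorem stmt_2_general {E V : Type*} [Fintype E] [Fintype V]
    (A : Matrix E V ℝ) (hA : IsIncidenceMatrix A)
    (g : V → ℝ) (a : V → ℝ)
    (F : E → ℝ) (Fst : ℝ)
    (hdiv : Aᵀ *ᵥ F = Fst • a)
    (hcap : ∀ i : V, Real.sqrt (∑ e, |A e i| * (F e) ^ 2) ≤ g i)
    (u : V → ℝ) (hu : ∑ i, a i * u i = 1) :
    Fst ≤ ∑ i, g i * Real.sqrt (∑ e, |A e i| * ((A *ᵥ u) e) ^ 2) := by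
  have hTV_nonneg : 0 ≤ ∑ i, g i * √(∑ e, |A e i| * ((A *ᵥ u) e) ^ 2) :=
    Finset.sum_nonneg fun i _ ↦ mul_nonneg ((Real.sqrt_nonneg _).trans (hcap i)) (by positivity)
  have hFst := eq_dotProduct_mulVec_of_transpose_mulVec_eq_smul hdiv hu
  have h2Fst : 2 * Fst ≤ ∑ i, g i * √(∑ e, |A e i| * ((A *ᵥ u) e) ^ 2) :=
    calc 2 * Fst = ∑ i, ∑ e, |A e i| * (F e * (A *ᵥ u) e) := by
          rw [hA.sum_sum_abs_mul, hFst, dotProduct]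
      _ ≤ ∑ i, √(∑ e, |A e i| * F e ^ 2) * √(∑ e, |A e i| * ((A *ᵥ u) e) ^ 2) :=
          Finset.sum_le_sum fun i _ ↦ Real.sum_mul_mul_le_sqrt_mul_sqrt _
            (fun e _ ↦ abs_nonneg _) _ _
      _ ≤ ∑ i, g i * √(∑ e, |A e i| * ((A *ᵥ u) e) ^ 2) :=
          Finset.sum_le_sum fun i _ ↦ mul_le_mul_of_nonneg_right (hcap i) (Real.sqrt_nonneg _)
  linarith

/-- The combinatorial continuous max-flow is bounded by the combinatorial total
variation: if `AᵀF = F_st • a`, `√(|Aᵀ|F²) ≤ g` entrywise and `aᵀu = 1`, then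
`F_st ≤ gᵀ √(|Aᵀ|(Au)²)`. -/
theorem stmt_2 {E V : Type*} [Fintype E] [Fintype V] [Nonempty E] [Nonempty V]
    (A : Matrix E V ℝ) (hA : IsIncidenceMatrix A)
    (g : V → ℝ) (a : V → ℝ)
    (ha : ∀ i : V, a i = -1 ∨ a i = 0 ∨ a i = 1)  -- `a` is a source/sink indicator vector
    (F : E → ℝ) (Fst : ℝ)
    (hdiv : Aᵀ *ᵥ F = Fst • a)
    (hcap : ∀ i : V, Real.sqrt (∑ e, |A e i| * (F e) ^ 2) ≤ g i)
    (u : V → ℝ) (hu : ∑ i, a i * u i = 1) :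
    Fst ≤ ∑ i, g i * Real.sqrt (∑ e, |A e i| * ((A *ᵥ u) e) ^ 2) :=
  stmt_2_general A hA g a F Fst hdiv hcap u hu
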